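/- arXiv:1601.01192 — 2 statements merged into one kernel-verified Lean document; each statement's English description precedes it below -/
import Mathlib

section
/- Let n ≥ 1 and τ ≥ 0, and set σ = τ/((n−1)τ + n). Then Ω̃(σ) ⊆ Ω^n(τ): if ω ∈ ℝⁿ \ ℚⁿ is nonresonant and there is C > 0 with T_{i+1}(ω) ≤ C·T_i(ω)^{1+σ} for all i ∈ ℕ, then there exists D > 0 such that ‖⟨k,ω⟩‖_ℤ ≥ D·|k|^{-(1+τ)n} for every nonzero k ∈ ℤⁿ. -/
open Finset

/-- Sup norm on `ℝⁿ`. -/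
noncomputable def supNorm {n : ℕ} (x : Fin n → ℝ) : ℝ := ⨆ i, |x i|

/-- Sup-norm distance from `x ∈ ℝⁿ` to the lattice `ℤⁿ`. -/
noncomputable def distZ {n : ℕ} (x : Fin n → ℝ) : ℝ :=
  sInf {r : ℝ | ∃ k : Fin n → ℤ, r = supNorm (fun i => x i - k i)}

/-- Distance from a real number to `ℤ`. -/
noncomputable def distZ1 (t : ℝ) : ℝ := sInf {r : ℝ | ∃ m : ℤ, r = |t - m|}

/-- `ω ∈ ℚⁿ`. -/
def IsRationalVec {n : ℕ} (ω : Fin n → ℝ) : Prop := ∀ i, ∃ q : ℚ, (q : ℝ) = ω i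

/-- `ω` is resonant: some nonzero integer vector `k` has `⟨k, ω⟩ ∈ ℤ`. -/
def Resonant {n : ℕ} (ω : Fin n → ℝ) : Prop :=
  ∃ k : Fin n → ℤ, k ≠ 0 ∧ ∃ m : ℤ, ∑ i, (k i : ℝ) * ω i = (m : ℝ)

/-- The sequence of periods of `ω`. -/
noncomputable def periods {n : ℕ} (ω : Fin n → ℝ) : ℕ → ℕ
  | 0 => 1
  | i + 1 => sInf {T : ℕ | 1 ≤ T ∧
      distZ (fun j => (T : ℝ) * ω j) < distZ (fun j => (periods ω i : ℝ) * ω j)}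

/-- The resonance module of `ω`, as a subgroup of `ℤⁿ`. -/
def resModule {n : ℕ} (ω : Fin n → ℝ) : AddSubgroup (Fin n → ℤ) where
  carrier := {k | ∃ m : ℤ, ∑ i, (k i : ℝ) * ω i = (m : ℝ)}
  zero_mem' := ⟨0, by simp⟩
  add_mem' := by
    rintro a b ⟨ma, ha⟩ ⟨mb, hb⟩
    refine ⟨ma + mb, ?_⟩
    push_cast
    simp only [Pi.add_apply, Int.cast_add, add_mul, Finset.sum_add_distrib, ha, hb]
  neg_mem' := by
    rintro a ⟨m, hm⟩
    refine ⟨-m, ?_⟩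
    push_cast
    simp [neg_mul, Finset.sum_neg_distrib, hm]

/-!
Write `T_i` for the periods of `ω`, `δ_i = ‖T_i ω‖_ℤ`, and `ε = ‖⟨k, ω⟩‖_ℤ > 0`. Dirichlet's
pigeonhole argument gives `T_{i+1} ≤ (2 / δ_i)^n`. Let `T_{j+1}` be the first period with
`T_{j+1} ε ≥ 1/2`, so that `ε ≥ 1 / (2 T_{j+1})`. As `T_j ε < 1/2`, we have
`T_j ε = ‖T_j ⟨k, ω⟩‖_ℤ ≤ n |k| δ_j`, hence `T_j ≤ 4 n |k| T_{j+1}^{1 - 1/n}`. Inserting this into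
`T_{j+1} ≤ C T_j^{1+σ}` bounds `T_{j+1}` by a power `< 1` of itself, so
`T_{j+1} ≤ C^{(n-1)τ+n} (4 n |k|)^{n(1+τ)}`.
-/

lemma supNorm_eq_norm {n : ℕ} (x : Fin n → ℝ) : supNorm x = ‖x‖ := by
  refine le_antisymm (Real.iSup_le (fun i => ?_) (norm_nonneg x)) ?_
  · simpa only [Real.norm_eq_abs] using norm_le_pi_norm x i
  · refine (pi_norm_le_iff_of_nonneg (Real.iSup_nonneg fun i => abs_nonneg (x i))).2 fun i => ?_
    exact le_ciSup (f := fun i => |x i|) (Finite.bddAbove_range _) i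

lemma distZ1_eq_abs_sub_round (t : ℝ) : distZ1 t = |t - round t| :=
  le_antisymm (csInf_le ⟨0, by rintro r ⟨m, rfl⟩; positivity⟩ ⟨round t, rfl⟩)
    (le_csInf ⟨_, round t, rfl⟩ (by rintro r ⟨m, rfl⟩; exact round_le t m))

lemma distZ1_le_abs_sub (t : ℝ) (m : ℤ) : distZ1 t ≤ |t - m| :=
  (distZ1_eq_abs_sub_round t).trans_le (round_le t m)

lemma distZ1_add_intCast (t : ℝ) (m : ℤ) : distZ1 (t + m) = distZ1 t := by
  simp only [distZ1_eq_abs_sub_round, round_add_intCast, Int.cast_add, add_sub_add_right_eq_sub]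

lemma distZ1_eq_abs {t : ℝ} (ht : |t| ≤ 1 / 2) : distZ1 t = |t| := by
  refine le_antisymm (by simpa using distZ1_le_abs_sub t 0) ?_
  rw [distZ1_eq_abs_sub_round]
  rcases eq_or_ne (round t) 0 with h | h
  · simp [h]
  · have : (1 : ℝ) ≤ |(round t : ℝ)| := by exact_mod_cast Int.one_le_abs h
    have := abs_sub_abs_le_abs_sub (round t : ℝ) t
    rw [abs_sub_comm] at this
    linarith

section distZ

variable {n : ℕ}

lemma abs_sub_round_le_distZ (x : Fin n → ℝ) (i : Fin n) : |x i - round (x i)| ≤ distZ x := by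
  refine le_csInf ⟨_, fun i => round (x i), rfl⟩ ?_
  rintro r ⟨k, rfl⟩
  rw [supNorm_eq_norm]
  exact (round_le (x i) (k i)).trans (norm_le_pi_norm (fun i => x i - k i) i)

lemma distZ_le_norm_sub (x : Fin n → ℝ) (k : Fin n → ℤ) : distZ x ≤ ‖fun i => x i - k i‖ := by
  rw [← supNorm_eq_norm]
  exact csInf_le ⟨0, by rintro r ⟨k, rfl⟩; rw [supNorm_eq_norm]; positivity⟩ ⟨k, rfl⟩

lemma distZ_le_half (x : Fin n → ℝ) : distZ x ≤ 1 / 2 :=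
  (distZ_le_norm_sub x fun i => round (x i)).trans <|
    (pi_norm_le_iff_of_nonneg (by norm_num : (0 : ℝ) ≤ 1 / 2)).2 fun i => abs_sub_round (x i)

lemma distZ1_sum_mul_le (k : Fin n → ℤ) (x : Fin n → ℝ) :
    distZ1 (∑ i, k i * x i) ≤ n * ‖fun i => (k i : ℝ)‖ * distZ x := by
  calc distZ1 (∑ i, k i * x i)
      ≤ |∑ i, k i * x i - ((∑ i, k i * round (x i) : ℤ) : ℝ)| := distZ1_le_abs_sub _ _
    _ = |∑ i, (k i : ℝ) * (x i - round (x i))| := by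
        push_cast; simp only [mul_sub, Finset.sum_sub_distrib]
    _ ≤ ∑ i, |(k i : ℝ)| * |x i - round (x i)| := by
        simpa only [abs_mul] using
          Finset.abs_sum_le_sum_abs (fun i => (k i : ℝ) * (x i - round (x i))) univ
    _ ≤ ∑ _i : Fin n, ‖fun i => (k i : ℝ)‖ * distZ x := by
        gcongr with i
        · exact norm_le_pi_norm (fun i => (k i : ℝ)) i
        · exact abs_sub_round_le_distZ x i
    _ = n * ‖fun i => (k i : ℝ)‖ * distZ x := by simp [mul_assoc]

end distZ

lemma distZ1_natCast_mul {T : ℕ} {t : ℝ} (h : T * distZ1 t ≤ 1 / 2) :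
    distZ1 (T * t) = T * distZ1 t := by
  have hT : (T : ℝ) * t = T * (t - round t) + ((T * round t : ℤ) : ℝ) := by push_cast; ring
  have hθ : |(T : ℝ) * (t - round t)| = T * distZ1 t := by
    rw [abs_mul, Nat.abs_cast, distZ1_eq_abs_sub_round]
  rw [hT, distZ1_add_intCast, distZ1_eq_abs (hθ ▸ h), hθ]

section Dirichlet

variable {n : ℕ}

noncomputable def distZMul (ω : Fin n → ℝ) (T : ℕ) : ℝ := distZ fun j => T * ω j

/-- Dirichlet's simultaneous approximation theorem. -/
theorem exists_distZMul_lt (ω : Fin n → ℝ) {M : ℕ} (hM : 0 < M) :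
    ∃ T : ℕ, 0 < T ∧ T ≤ M ^ n ∧ distZMul ω T < 1 / M := by
  have hM' : (0 : ℝ) < M := Nat.cast_pos.2 hM
  let box : ℕ → Fin n → ℤ := fun t j => ⌊M * Int.fract (t * ω j)⌋
  have hbox : Set.MapsTo box (range (M ^ n + 1))
      (Fintype.piFinset fun _ : Fin n => Ico (0 : ℤ) M : Set (Fin n → ℤ)) := by
    intro t _
    simp only [coe_Ico, Fintype.coe_piFinset, Set.mem_pi, Set.mem_univ, Set.mem_Ico,
      forall_const, Int.floor_nonneg, Int.floor_lt, Int.cast_natCast, box]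
    exact fun j => ⟨by positivity, mul_lt_of_lt_one_right hM' (Int.fract_lt_one _)⟩
  have hcard : #(Fintype.piFinset fun _ : Fin n => Ico (0 : ℤ) M) < #(range (M ^ n + 1)) := by
    simp
  obtain ⟨a, ha, b, hb, hab, hboxab⟩ := exists_ne_map_eq_of_card_lt_of_maps_to hcard hbox
  wlog hlt : a < b generalizing a b
  · exact this b hb a ha hab.symm hboxab.symm (by omega)
  refine ⟨b - a, by omega, by simp at hb; omega, ?_⟩
  refine (distZ_le_norm_sub _ fun j => ⌊b * ω j⌋ - ⌊a * ω j⌋).trans_lt <|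
    (pi_norm_lt_iff (by positivity)).2 fun j => ?_
  have hfract := Int.abs_sub_lt_one_of_floor_eq_floor (congrFun hboxab j).symm
  rw [← mul_sub, abs_mul, abs_of_pos hM', ← lt_div_iff₀' hM'] at hfract
  have hdiff : ((b - a : ℕ) : ℝ) * ω j - ((⌊b * ω j⌋ - ⌊a * ω j⌋ : ℤ) : ℝ) =
      Int.fract (b * ω j) - Int.fract (a * ω j) := by
    push_cast [Nat.cast_sub hlt.le, Int.fract]
    ring
  rwa [Real.norm_eq_abs, hdiff]

end Dirichlet

section Periods

variable {n : ℕ} {ω : Fin n → ℝ}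

lemma distZMul_pos [Nonempty (Fin n)] (hω : ¬ Resonant ω) {T : ℕ} (hT : 0 < T) :
    0 < distZMul ω T := by
  obtain ⟨j⟩ := ‹Nonempty (Fin n)›
  refine (abs_pos.2 <| sub_ne_zero.2 fun h => hω ?_).trans_le (abs_sub_round_le_distZ _ j)
  refine ⟨Pi.single j (T : ℤ), by simpa using hT.ne', round (T * ω j), ?_⟩
  simpa [Pi.single_apply] using h

lemma periods_succ_spec [Nonempty (Fin n)] (hω : ¬ Resonant ω) {i : ℕ} (hi : 0 < periods ω i) :
    0 < periods ω (i + 1) ∧ distZMul ω (periods ω (i + 1)) < distZMul ω (periods ω i) ∧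
      (periods ω (i + 1) : ℝ) ≤ (2 / distZMul ω (periods ω i)) ^ n := by
  set δ := distZMul ω (periods ω i)
  have hδ : 0 < δ := distZMul_pos hω hi
  set M := ⌈1 / δ⌉₊
  have hM : 0 < M := Nat.ceil_pos.2 (by positivity)
  have hMδ : 1 / (M : ℝ) ≤ δ := by
    rw [div_le_iff₀ (by positivity), ← div_le_iff₀' hδ]
    exact Nat.le_ceil _
  have hM2 : (M : ℝ) ≤ 2 / δ := by
    have hδ2 : δ ≤ 1 / 2 := distZ_le_half _
    have h1 : 1 ≤ 1 / δ := by rw [le_div_iff₀ hδ]; linarith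
    calc (M : ℝ) ≤ 1 / δ + 1 := (Nat.ceil_lt_add_one (one_div_pos.2 hδ).le).le
      _ ≤ 2 / δ := by rw [show 2 / δ = 1 / δ + 1 / δ by ring]; gcongr
  obtain ⟨T, hT, hTM, hTδ⟩ := exists_distZMul_lt ω hM
  have hmem : T ∈ {T : ℕ | 1 ≤ T ∧ distZMul ω T < δ} := ⟨hT, hTδ.trans_le hMδ⟩
  obtain ⟨hpos, hlt⟩ := Nat.sInf_mem ⟨T, hmem⟩
  refine ⟨hpos, hlt, ?_⟩
  calc (periods ω (i + 1) : ℝ) ≤ (M ^ n : ℕ) := by exact_mod_cast (Nat.sInf_le hmem).trans hTM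
    _ ≤ (2 / δ) ^ n := by push_cast; gcongr

lemma periods_pos [Nonempty (Fin n)] (hω : ¬ Resonant ω) (i : ℕ) : 0 < periods ω i := by
  induction i with
  | zero => exact Nat.one_pos
  | succ i ih => exact (periods_succ_spec hω ih).1

lemma distZMul_periods_succ_lt [Nonempty (Fin n)] (hω : ¬ Resonant ω) (i : ℕ) :
    distZMul ω (periods ω (i + 1)) < distZMul ω (periods ω i) :=
  (periods_succ_spec hω (periods_pos hω i)).2.1

lemma periods_succ_le [Nonempty (Fin n)] (hω : ¬ Resonant ω) (i : ℕ) :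
    (periods ω (i + 1) : ℝ) ≤ (2 / distZMul ω (periods ω i)) ^ n :=
  (periods_succ_spec hω (periods_pos hω i)).2.2

lemma distZMul_periods_le [Nonempty (Fin n)] (hω : ¬ Resonant ω) {i T : ℕ} (hT : 0 < T)
    (hTi : T ≤ periods ω i) : distZMul ω (periods ω i) ≤ distZMul ω T := by
  cases i with
  | zero =>
    obtain rfl : T = 1 := by simp only [periods] at hTi; omega
    rfl
  | succ i =>
    rcases hTi.eq_or_lt with rfl | hlt
    · exact le_rfl
    · have hT' : ¬ (1 ≤ T ∧ distZMul ω T < distZMul ω (periods ω i)) := Nat.notMem_of_lt_sInf hlt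
      exact (distZMul_periods_succ_lt hω i).le.trans (not_lt.1 fun h => hT' ⟨hT, h⟩)

lemma strictMono_periods [Nonempty (Fin n)] (hω : ¬ Resonant ω) : StrictMono (periods ω) :=
  strictMono_nat_of_lt_succ fun i => lt_of_not_ge fun h =>
    (distZMul_periods_succ_lt hω i).not_ge (distZMul_periods_le hω (periods_pos hω (i + 1)) h)

end Periods

lemma le_rpow_of_le_mul_rpow_one_sub_inv {t c a : ℝ} (ht : 0 < t) (ha : 0 < a)
    (h : t ≤ c * t ^ (1 - a⁻¹)) : t ≤ c ^ a := by
  rw [Real.rpow_sub ht, Real.rpow_one, mul_div_assoc', le_div_iff₀ (by positivity),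
    mul_comm c, mul_le_mul_iff_right₀ ht] at h
  exact (Real.rpow_inv_le_iff_of_pos ht.le ((Real.rpow_pos_of_pos ht _).le.trans h) ha).1 h

section Estimate

variable {n : ℕ} {ω : Fin n → ℝ}

lemma natCast_mul_distZ1_le (k : Fin n → ℤ) {T : ℕ}
    (hT : T * distZ1 (∑ i, k i * ω i) ≤ 1 / 2) :
    T * distZ1 (∑ i, k i * ω i) ≤ n * ‖fun i => (k i : ℝ)‖ * distZMul ω T := by
  rw [← distZ1_natCast_mul hT, Finset.mul_sum]
  simp only [mul_left_comm (T : ℝ)]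
  exact distZ1_sum_mul_le k fun j => T * ω j

lemma distZ1_sum_mul_pos (hω : ¬ Resonant ω) {k : Fin n → ℤ} (hk : k ≠ 0) :
    0 < distZ1 (∑ i, k i * ω i) := by
  rw [distZ1_eq_abs_sub_round]
  exact abs_pos.2 <| sub_ne_zero.2 fun h => hω ⟨k, hk, _, h⟩

end Estimate

lemma one_le_norm_intCast {n : ℕ} {k : Fin n → ℤ} (hk : k ≠ 0) : 1 ≤ ‖fun i => (k i : ℝ)‖ := by
  obtain ⟨j, hj⟩ := Function.ne_iff.1 hk
  calc (1 : ℝ) ≤ |(k j : ℝ)| := by exact_mod_cast Int.one_le_abs hj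
    _ ≤ _ := norm_le_pi_norm (fun i => (k i : ℝ)) j

section Main

variable {n : ℕ} [Nonempty (Fin n)] {ω : Fin n → ℝ} {τ C : ℝ}

lemma one_le_of_periods_succ_le (hω : ¬ Resonant ω) {p : ℝ}
    (hper : ∀ i : ℕ, (periods ω (i + 1) : ℝ) ≤ C * (periods ω i : ℝ) ^ p) : 1 ≤ C := by
  simpa [periods] using (Nat.one_le_cast.2 (periods_pos hω 1)).trans (hper 0)

lemma periods_succ_le_of_mul_distZ1 (hω : ¬ Resonant ω) (hτ : 0 ≤ τ)
    (hper : ∀ i : ℕ, (periods ω (i + 1) : ℝ) ≤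
      C * (periods ω i : ℝ) ^ (1 + τ / (((n : ℝ) - 1) * τ + (n : ℝ))))
    (k : Fin n → ℤ) {j : ℕ} (hj : periods ω j * distZ1 (∑ i, k i * ω i) ≤ 1 / 2)
    (hj' : 1 / 2 ≤ periods ω (j + 1) * distZ1 (∑ i, k i * ω i)) :
    (periods ω (j + 1) : ℝ) ≤
      C ^ (((n : ℝ) - 1) * τ + n) * (4 * n * ‖fun i => (k i : ℝ)‖) ^ ((n : ℝ) * (1 + τ)) := by
  set a := ((n : ℝ) - 1) * τ + n
  set p := 1 + τ / a
  set K := ‖fun i => (k i : ℝ)‖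
  set ε := distZ1 (∑ i, k i * ω i)
  set δ := distZMul ω (periods ω j)
  set t := ((periods ω (j + 1) : ℕ) : ℝ)
  set w := ((periods ω j : ℕ) : ℝ)
  have hn : (1 : ℝ) ≤ n := Nat.one_le_cast.2 (Fin.pos_iff_nonempty.2 ‹_›)
  have ha : 0 < a := by nlinarith
  have hC : 0 ≤ C := zero_le_one.trans (one_le_of_periods_succ_le hω hper)
  have ht : 0 < t := Nat.cast_pos.2 (periods_pos hω _)
  have hw : 0 < w := Nat.cast_pos.2 (periods_pos hω _)
  have hδ : δ ≤ 2 / t ^ (n⁻¹ : ℝ) := by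
    have hδ0 : 0 < δ := distZMul_pos hω (periods_pos hω j)
    rw [le_div_iff₀ (by positivity), mul_comm, ← le_div_iff₀ hδ0,
      Real.rpow_inv_le_iff_of_pos ht.le (by positivity) (by linarith), Real.rpow_natCast]
    exact periods_succ_le hω j
  have hwt : w ≤ 4 * n * K * t ^ (1 - (n⁻¹ : ℝ)) :=
    calc w ≤ w * (2 * (t * ε)) := le_mul_of_one_le_right hw.le (by linarith)
      _ = 2 * t * (w * ε) := by ring
      _ ≤ 2 * t * (n * K * δ) := by gcongr 2 * t * ?_; exact natCast_mul_distZ1_le k hj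
      _ ≤ 2 * t * (n * K * (2 / t ^ (n⁻¹ : ℝ))) := by gcongr
      _ = 4 * n * K * t ^ (1 - (n⁻¹ : ℝ)) := by rw [Real.rpow_sub ht, Real.rpow_one]; ring
  -- `σ = τ/((n-1)τ+n)` is exactly the exponent that makes `t` reappear with power `1 - a⁻¹ < 1`
  have hexp : (1 - (n⁻¹ : ℝ)) * p = 1 - a⁻¹ := by
    simp only [p]; field_simp; simp only [a]; ring
  have hpa : p * a = n * (1 + τ) := by simp only [p]; field_simp; simp only [a]; ring
  have hself : t ≤ C * (4 * n * K) ^ p * t ^ (1 - a⁻¹) :=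
    calc t ≤ C * w ^ p := hper j
      _ ≤ C * (4 * n * K * t ^ (1 - (n⁻¹ : ℝ))) ^ p := by gcongr
      _ = C * (4 * n * K) ^ p * t ^ (1 - a⁻¹) := by
          rw [Real.mul_rpow (by positivity) (by positivity), ← Real.rpow_mul ht.le, hexp]
          ring
  have := le_rpow_of_le_mul_rpow_one_sub_inv ht ha hself
  rwa [Real.mul_rpow hC (by positivity), ← Real.rpow_mul (by positivity), hpa] at this

lemma inv_le_distZ1_sum_mul (hω : ¬ Resonant ω) (hτ : 0 ≤ τ)
    (hper : ∀ i : ℕ, (periods ω (i + 1) : ℝ) ≤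
      C * (periods ω i : ℝ) ^ (1 + τ / (((n : ℝ) - 1) * τ + (n : ℝ))))
    {k : Fin n → ℤ} (hk : k ≠ 0) :
    (2 * (C ^ (((n : ℝ) - 1) * τ + n) *
      (4 * n * ‖fun i => (k i : ℝ)‖) ^ ((n : ℝ) * (1 + τ))))⁻¹ ≤ distZ1 (∑ i, k i * ω i) := by
  set B := C ^ (((n : ℝ) - 1) * τ + n) * (4 * n * ‖fun i => (k i : ℝ)‖) ^ ((n : ℝ) * (1 + τ))
  set ε := distZ1 (∑ i, k i * ω i)
  have hε : 0 < ε := distZ1_sum_mul_pos hω hk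
  have hex : ∃ i, 1 / 2 ≤ periods ω i * ε := by
    refine ⟨⌈(2 * ε)⁻¹⌉₊, ?_⟩
    have hle : (2 * ε)⁻¹ ≤ periods ω ⌈(2 * ε)⁻¹⌉₊ :=
      (Nat.le_ceil _).trans (Nat.cast_le.2 ((strictMono_periods hω).id_le _))
    rw [inv_le_iff_one_le_mul₀ (by positivity)] at hle
    linarith
  obtain ⟨i, hi, hiB⟩ : ∃ i, 1 / 2 ≤ periods ω i * ε ∧ (periods ω i : ℝ) ≤ B := by
    refine ⟨Nat.find hex, Nat.find_spec hex, ?_⟩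
    rcases hfind : Nat.find hex with _ | j
    · have hn : (1 : ℝ) ≤ n := Nat.one_le_cast.2 (Fin.pos_iff_nonempty.2 ‹_›)
      have hC := one_le_of_periods_succ_le hω hper
      have hK := one_le_norm_intCast hk
      simp only [periods, Nat.cast_one]
      exact one_le_mul_of_one_le_of_one_le (Real.one_le_rpow hC (by nlinarith))
        (Real.one_le_rpow (by nlinarith) (by positivity))
    · have hj := Nat.find_min hex (hfind.symm ▸ Nat.lt_succ_self j : j < Nat.find hex)
      exact periods_succ_le_of_mul_distZ1 hω hτ hper k (not_le.1 hj).le (hfind ▸ Nat.find_spec hex)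
  have hpos : (0 : ℝ) < periods ω i := Nat.cast_pos.2 (periods_pos hω i)
  calc (2 * B)⁻¹ ≤ (2 * (periods ω i : ℝ))⁻¹ := by gcongr
    _ ≤ ε := by rw [inv_le_iff_one_le_mul₀ (by positivity)]; linarith

end Main

theorem stmt4_general {n : ℕ} (hn : 1 ≤ n) (τ : ℝ) (hτ : 0 ≤ τ) (ω : Fin n → ℝ)
    (hres : ¬ Resonant ω) (C : ℝ)
    (hper : ∀ i : ℕ, (periods ω (i + 1) : ℝ) ≤
      C * (periods ω i : ℝ) ^ (1 + τ / (((n : ℝ) - 1) * τ + (n : ℝ)))) :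
    ∃ D > (0 : ℝ), ∀ k : Fin n → ℤ, k ≠ 0 →
      distZ1 (∑ i, (k i : ℝ) * ω i) ≥
        D * (supNorm fun i => (k i : ℝ)) ^ (-(1 + τ) * (n : ℝ)) := by
  have : Nonempty (Fin n) := Fin.pos_iff_nonempty.1 hn
  have hn' : (0 : ℝ) < n := Nat.cast_pos.2 hn
  have hC : 0 < C := zero_lt_one.trans_le (one_le_of_periods_succ_le hres hper)
  refine ⟨(2 * C ^ (((n : ℝ) - 1) * τ + n) * (4 * n) ^ ((n : ℝ) * (1 + τ)))⁻¹, by positivity,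
    fun k hk => ?_⟩
  have hK : 0 < ‖fun i => (k i : ℝ)‖ := zero_lt_one.trans_le (one_le_norm_intCast hk)
  refine le_of_eq_of_le ?_ (inv_le_distZ1_sum_mul hres hτ hper hk)
  rw [supNorm_eq_norm, neg_mul, Real.rpow_neg hK.le, Real.mul_rpow (by positivity) hK.le,
    mul_comm (1 + τ)]
  field_simp

/-- with `σ = τ/((n-1)τ+n)`, `Ω̃(σ) ⊆ Ω^n(τ)`. -/
theorem stmt4 {n : ℕ} (hn : 1 ≤ n) (τ : ℝ) (hτ : 0 ≤ τ) (ω : Fin n → ℝ)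
    (hirr : ¬ IsRationalVec ω) (hres : ¬ Resonant ω) (C : ℝ) (hC : 0 < C)
    (hper : ∀ i : ℕ, (periods ω (i + 1) : ℝ) ≤
      C * (periods ω i : ℝ) ^ (1 + τ / (((n : ℝ) - 1) * τ + (n : ℝ)))) :
    ∃ D > (0 : ℝ), ∀ k : Fin n → ℤ, k ≠ 0 →
      distZ1 (∑ i, (k i : ℝ) * ω i) ≥
        D * (supNorm fun i => (k i : ℝ)) ^ (-(1 + τ) * (n : ℝ)) :=
  stmt4_general hn τ hτ ω hres C hper
end

section
/- Let n ≥ 2 and let τ be a real number with 0 ≤ τ < 1/(n−1). Then every vector of Ω_n(τ) is nonresonant: if ω ∈ ℝⁿ and there is C > 0 with ‖Tω‖_ℤ ≥ C·T^{-(1+τ)/n} for every positive integer T, then there is no nonzero k ∈ ℤⁿ with ⟨k,ω⟩ ∈ ℤ. -/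
open Finset

/-!
Let `⟨k, ω⟩ ∈ ℤ` with `k i₀ = b ≠ 0`. Dirichlet's theorem applied to the `n - 1` numbers `b ω_j`,
`j ≠ i₀`, gives `T ≤ Q ^ (n - 1)` with all `T b ω_j` within `1/Q` of integers; the resonance
relation then puts `T b ω_{i₀}` too within `K/Q` of an integer, `K = ∑ |k_i|`, so
`‖T b² ω‖_ℤ ≤ K/Q`. Against the lower bound `C (b² Q^(n-1))^(-(1+τ)/n)` this keeps
`Q ^ (1 - (n-1)(1+τ)/n)` bounded, which fails as `Q → ∞` exactly when `τ < 1/(n-1)`.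
-/

lemma distZ_le_of_forall_abs_sub_le {n : ℕ} {x : Fin n → ℝ} (k : Fin n → ℤ) {B : ℝ}
    (hB : 0 ≤ B) (h : ∀ i, |x i - k i| ≤ B) : distZ x ≤ B := by
  have hbdd : BddBelow {r : ℝ | ∃ k : Fin n → ℤ, r = supNorm (fun i => x i - k i)} :=
    ⟨0, by rintro r ⟨k', rfl⟩; exact Real.iSup_nonneg fun _ => abs_nonneg _⟩
  exact (csInf_le hbdd ⟨k, rfl⟩).trans (Real.iSup_le h hB)

lemma abs_fract_sub_fract_lt {Q : ℕ} (hQ : 0 < Q) {x y : ℝ}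
    (h : ⌊(Q : ℝ) * Int.fract x⌋ = ⌊(Q : ℝ) * Int.fract y⌋) :
    |Int.fract x - Int.fract y| < 1 / Q := by
  have hQ' : (0 : ℝ) < Q := by exact_mod_cast hQ
  have := Int.abs_sub_lt_one_of_floor_eq_floor h
  rwa [← mul_sub, abs_mul, abs_of_pos hQ', ← lt_div_iff₀' hQ'] at this

/-- Dirichlet's simultaneous approximation theorem. -/
theorem exists_nat_abs_mul_sub_lt {ι : Type*} [Fintype ι] (α : ι → ℝ) {Q : ℕ} (hQ : 0 < Q) :
    ∃ T : ℕ, 1 ≤ T ∧ T ≤ Q ^ Fintype.card ι ∧ ∀ i, ∃ p : ℤ, |T * α i - p| < 1 / Q := by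
  classical
  have hQ' : (0 : ℝ) < Q := by exact_mod_cast hQ
  let box : ℕ → ι → ℤ := fun t i => ⌊(Q : ℝ) * Int.fract (t * α i)⌋
  have hbox : Set.MapsTo box (range (Q ^ Fintype.card ι + 1))
      (Fintype.piFinset fun _ : ι => Ico (0 : ℤ) Q : Set (ι → ℤ)) := by
    refine fun t _ => Fintype.mem_piFinset.2 fun i => mem_Ico.2 ⟨?_, ?_⟩
    · exact Int.floor_nonneg.2 (mul_nonneg hQ'.le (Int.fract_nonneg _))
    · refine Int.floor_lt.2 ?_
      simpa using mul_lt_mul_of_pos_left (Int.fract_lt_one (t * α i)) hQ'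
  have hcard : #(Fintype.piFinset fun _ : ι => Ico (0 : ℤ) Q) <
      #(range (Q ^ Fintype.card ι + 1)) := by
    simp
  obtain ⟨t₁, ht₁, t₂, ht₂, hne, heq⟩ := exists_ne_map_eq_of_card_lt_of_maps_to hcard hbox
  wlog hlt : t₁ < t₂ generalizing t₁ t₂
  · exact this t₂ ht₂ t₁ ht₁ hne.symm heq.symm (hne.lt_or_gt.resolve_left hlt)
  rw [mem_range] at ht₂
  refine ⟨t₂ - t₁, by omega, by omega, fun i => ⟨⌊t₂ * α i⌋ - ⌊t₁ * α i⌋, ?_⟩⟩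
  have := abs_fract_sub_fract_lt hQ (congrFun heq i).symm
  rw [Int.fract, Int.fract] at this
  convert this using 2
  push_cast [hlt.le]
  ring

lemma distZ_mul_le_of_sum_mul_eq_int {n : ℕ} {k : Fin n → ℤ} {y : Fin n → ℝ} {M : ℤ}
    (hM : ∑ i, (k i : ℝ) * y i = M) (i₀ : Fin n) (p : Fin n → ℤ) {ε : ℝ} (hε : 0 ≤ ε)
    (hp : ∀ j ≠ i₀, |y j - p j| ≤ ε) :
    distZ (fun j => (k i₀ : ℝ) * y j) ≤ (∑ i, |(k i : ℝ)|) * ε := by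
  classical
  set K := ∑ i, |(k i : ℝ)|
  have hkK : ∀ j, |(k j : ℝ)| ≤ K := fun j =>
    single_le_sum (fun i _ => abs_nonneg (k i : ℝ)) (mem_univ j)
  -- the coordinate `i₀` is rounded through the relation `⟨k, y⟩ = M`
  let P : Fin n → ℤ :=
    Function.update (fun j => k i₀ * p j) i₀ (M - ∑ j ∈ univ.erase i₀, k j * p j)
  refine distZ_le_of_forall_abs_sub_le P (mul_nonneg ((abs_nonneg _).trans (hkK i₀)) hε)
    fun j => ?_
  rcases eq_or_ne j i₀ with rfl | hj
  · have hsplit := add_sum_erase univ (fun i => (k i : ℝ) * y i) (mem_univ j)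
    have herr : (k j : ℝ) * y j - P j = ∑ i ∈ univ.erase j, (k i : ℝ) * (p i - y i) := by
      simp only [P, Function.update_self]
      push_cast
      rw [← hM, ← hsplit]
      simp only [mul_sub, sum_sub_distrib]
      ring
    rw [herr]
    calc |∑ i ∈ univ.erase j, (k i : ℝ) * (p i - y i)|
        ≤ ∑ i ∈ univ.erase j, |(k i : ℝ)| * ε := by
          refine (abs_sum_le_sum_abs _ _).trans (sum_le_sum fun i hi => ?_)
          rw [abs_mul, abs_sub_comm]
          exact mul_le_mul_of_nonneg_left (hp i (ne_of_mem_erase hi)) (abs_nonneg _)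
      _ ≤ K * ε := by
          rw [← sum_mul]
          exact mul_le_mul_of_nonneg_right
            (sum_le_sum_of_subset_of_nonneg (erase_subset _ _) fun _ _ _ => abs_nonneg _) hε
  · simp only [P, Function.update_of_ne hj]
    push_cast
    rw [← mul_sub, abs_mul]
    exact mul_le_mul (hkK i₀) (hp j hj) (abs_nonneg _) ((abs_nonneg _).trans (hkK i₀))

theorem Resonant.exists_distZ_le {n : ℕ} {ω : Fin n → ℝ} (h : Resonant ω) :
    ∃ K c : ℝ, ∀ Q : ℕ, 0 < Q → ∃ T : ℕ, 1 ≤ T ∧ (T : ℝ) ≤ c * Q ^ (n - 1) ∧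
      distZ (fun j => T * ω j) ≤ K / Q := by
  obtain ⟨k, hk, m, hm⟩ := h
  obtain ⟨i₀, hi₀⟩ := Function.ne_iff.1 hk
  refine ⟨∑ i, |(k i : ℝ)|, (k i₀ : ℝ) ^ 2, fun Q hQ => ?_⟩
  obtain ⟨T, hT1, hTQ, happrox⟩ :=
    exists_nat_abs_mul_sub_lt (fun j : {j // j ≠ i₀} => (k i₀ : ℝ) * ω j) hQ
  have happrox' : ∀ j, ∃ p : ℤ, j ≠ i₀ → |T * (k i₀ * ω j) - p| ≤ 1 / Q := fun j =>
    if hj : j = i₀ then ⟨0, fun h' => absurd hj h'⟩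
    else (happrox ⟨j, hj⟩).imp fun _ hlt _ => hlt.le
  choose p hp using happrox'
  have hcard : Fintype.card {j // j ≠ i₀} = n - 1 := by simp [Fintype.card_subtype_compl]
  refine ⟨T * (k i₀).natAbs ^ 2, ?_, ?_, ?_⟩
  · exact Nat.one_le_iff_ne_zero.2
      (mul_ne_zero (by omega) (pow_ne_zero 2 (Int.natAbs_ne_zero.2 hi₀)))
  · push_cast [Nat.cast_natAbs, sq_abs]
    rw [mul_comm]
    gcongr
    exact_mod_cast hcard ▸ hTQ
  · have hM : ∑ i, (k i : ℝ) * (T * (k i₀ * ω i)) = ((T * k i₀ * m : ℤ) : ℝ) := by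
      push_cast
      rw [← hm, mul_sum]
      exact sum_congr rfl fun _ _ => by ring
    have := distZ_mul_le_of_sum_mul_eq_int hM i₀ p (by positivity) hp
    rw [mul_one_div] at this
    convert this using 3
    push_cast [Nat.cast_natAbs, sq_abs]
    ring

open Filter Real in
lemma not_forall_exists_mul_rpow_neg_le_div {d : ℕ} {s C c K : ℝ} (hC : 0 < C) (hs : 0 ≤ s)
    (hds : d * s < 1) :
    ¬ ∀ Q : ℕ, 0 < Q → ∃ T : ℝ, 1 ≤ T ∧ T ≤ c * Q ^ d ∧ C * T ^ (-s) ≤ K / Q := by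
  intro h
  have hc : 0 < c := by
    obtain ⟨T, hT1, hTc, -⟩ := h 1 one_pos
    simp only [Nat.cast_one, one_pow, mul_one] at hTc
    linarith
  have hbound : ∀ Q : ℕ, 0 < Q → C * c ^ (-s) * (Q : ℝ) ^ (1 - d * s) ≤ K := by
    intro Q hQ
    obtain ⟨T, hT1, hTc, hT⟩ := h Q hQ
    have hQ' : (0 : ℝ) < Q := by exact_mod_cast hQ
    have hpow : (Q : ℝ) ^ (1 - d * s) = ((Q : ℝ) ^ d) ^ (-s) * Q := by
      rw [← rpow_natCast, ← rpow_mul hQ'.le, ← rpow_add_one hQ'.ne']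
      ring_nf
    calc C * c ^ (-s) * (Q : ℝ) ^ (1 - d * s) = C * (c * Q ^ d) ^ (-s) * Q := by
          rw [mul_rpow hc.le (by positivity), hpow]
          ring
      _ ≤ C * T ^ (-s) * Q := by
          have := rpow_le_rpow_of_nonpos (by linarith) hTc (neg_nonpos.2 hs)
          exact mul_le_mul_of_nonneg_right (mul_le_mul_of_nonneg_left this hC.le) hQ'.le
      _ ≤ K := (le_div_iff₀ hQ').1 hT
  have htend : Tendsto (fun Q : ℕ => C * c ^ (-s) * (Q : ℝ) ^ (1 - d * s)) atTop atTop :=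
    ((tendsto_rpow_atTop (by linarith)).comp tendsto_natCast_atTop_atTop).const_mul_atTop
      (by positivity)
  obtain ⟨Q, hQK, hQ⟩ := ((htend.eventually_gt_atTop K).and (eventually_gt_atTop 0)).exists
  exact (hbound Q hQ).not_gt hQK

theorem stmt14_general {n : ℕ} (τ : ℝ) (hτ0 : 0 ≤ τ) (hτ1 : τ < 1 / ((n : ℝ) - 1))
    (ω : Fin n → ℝ) (C : ℝ) (hC : 0 < C)
    (hΩ : ∀ T : ℕ, 1 ≤ T →
      distZ (fun j => (T : ℝ) * ω j) ≥ C * (T : ℝ) ^ (-(1 + τ) / (n : ℝ))) :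
    ¬ Resonant ω := by
  intro hres
  obtain ⟨K, c, happrox⟩ := hres.exists_distZ_le
  have hs : 0 ≤ (1 + τ) / n := by positivity
  have hds : ((n - 1 : ℕ) : ℝ) * ((1 + τ) / n) < 1 := by
    rcases Nat.lt_or_ge n 2 with hn | hn
    · interval_cases n <;> norm_num
    · have hn' : (2 : ℝ) ≤ n := by exact_mod_cast hn
      rw [Nat.cast_sub (by omega), Nat.cast_one, mul_div_assoc', div_lt_one (by positivity)]
      nlinarith [(lt_div_iff₀ (by linarith : (0 : ℝ) < n - 1)).1 hτ1]
  refine not_forall_exists_mul_rpow_neg_le_div (c := c) (K := K) hC hs hds fun Q hQ => ?_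
  obtain ⟨T, hT1, hTc, hTdist⟩ := happrox Q hQ
  refine ⟨T, by exact_mod_cast hT1, hTc, ?_⟩
  calc C * (T : ℝ) ^ (-((1 + τ) / n)) = C * (T : ℝ) ^ (-(1 + τ) / (n : ℝ)) := by rw [neg_div]
    _ ≤ distZ (fun j => T * ω j) := hΩ T hT1
    _ ≤ K / Q := hTdist

/-- for `0 ≤ τ < 1/(n-1)`, the vectors of `Ω_n(τ)` are nonresonant. -/
theorem stmt14 {n : ℕ} (hn : 2 ≤ n) (τ : ℝ) (hτ0 : 0 ≤ τ) (hτ1 : τ < 1 / ((n : ℝ) - 1))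
    (ω : Fin n → ℝ) (C : ℝ) (hC : 0 < C)
    (hΩ : ∀ T : ℕ, 1 ≤ T →
      distZ (fun j => (T : ℝ) * ω j) ≥ C * (T : ℝ) ^ (-(1 + τ) / (n : ℝ))) :
    ¬ Resonant ω :=
  stmt14_general τ hτ0 hτ1 ω C hC hΩ
end
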